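/- arXiv:1208.4195 — 4 statements merged into one kernel-verified Lean document; each statement's English description precedes it below -/
import Mathlib

section
/- Let m ≥ 2 and k₁, k₂ be integers, and let A ⊆ ℤ_m with B = ℤ_m \ A. If r̂_{k₁,k₂}(A,n) = r̂_{k₁,k₂}(B,n) for all n ∈ ℤ_m, then m is even and |A| = m/2. -/
def rhat (m : ℕ) (k1 k2 : ℤ) (A : Finset (ZMod m)) (n : ZMod m) : ℕ :=
  ((A ×ˢ A).filter (fun p => (k1 : ZMod m) * p.1 + (k2 : ZMod m) * p.2 = n)).card

lemma rhat_sum (m : ℕ) [NeZero m] (k1 k2 : ℤ) (A : Finset (ZMod m)) :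
    ∑ n : ZMod m, rhat m k1 k2 A n = A.card * A.card := by
  rw [← Finset.card_product A A]
  rw [Finset.card_eq_sum_card_fiberwise
    (f := fun p => (k1 : ZMod m) * p.1 + (k2 : ZMod m) * p.2) (t := Finset.univ)
    (fun x _ => Finset.mem_univ _)]
  rfl

theorem stmt0 (m : ℕ) [NeZero m] (hm : 2 ≤ m) (k1 k2 : ℤ) (A : Finset (ZMod m))
    (h : ∀ n : ZMod m, rhat m k1 k2 A n = rhat m k1 k2 Aᶜ n) :
    Even m ∧ 2 * A.card = m := by
  have hsum : A.card * A.card = Aᶜ.card * Aᶜ.card := by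
    rw [← rhat_sum m k1 k2 A, ← rhat_sum m k1 k2 Aᶜ]
    exact Finset.sum_congr rfl fun n _ => h n
  have hc : A.card = Aᶜ.card := by nlinarith [A.card.zero_le, Aᶜ.card.zero_le]
  have htot : A.card + Aᶜ.card = m := by
    rw [Finset.card_add_card_compl, ZMod.card]
  have h2 : 2 * A.card = m := by omega
  exact ⟨⟨A.card, by omega⟩, h2⟩
end

section
/- Let m ≥ 2 be even, k₁, k₂ integers, d₁ = gcd(k₁,m), d₂ = gcd(k₂,m), d₃ = gcd(d₁,d₂), and let A ⊆ ℤ_m with |A| = m/2, B = ℤ_m \ A. Then r̂_{k₁,k₂}(A,n) = r̂_{k₁,k₂}(B,n) holds for a given n ∈ ℤ_m if and only if d₁·#{a ∈ A : d₁ | k₂a − n} + d₂·#{a ∈ A : d₂ | k₁a − n} = d₁·#{b ∈ B : d₁ | k₂b − n} + d₂·#{b ∈ B : d₂ | k₁b − n}. -/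
/-!
Write `R(S, T)` for the number of solutions of `k₁ a₁ + k₂ a₂ = n` with `(a₁, a₂) ∈ S × T`, and
`B = Aᶜ`. Splitting `ℤ_m = A ∪ B` in either coordinate gives
`R(ℤ_m, A) + R(A, ℤ_m) - R(ℤ_m, B) - R(B, ℤ_m) = 2 (R(A, A) - R(B, B))`.
A mixed count such as `R(A, ℤ_m)` is a sum over `a ∈ A` of fibre sizes of `y ↦ k₂ y`, and the
fibre of this homomorphism over `c` has `gcd(k₂, m)` elements if `gcd(k₂, m) ∣ c` and none otherwise.
-/

open Finset

lemma card_filter_product_eq_sum {α β : Type*} (Q : α × β → Prop) [DecidablePred Q]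
    (S : Finset α) (T : Finset β) : #{p ∈ S ×ˢ T | Q p} = ∑ a ∈ S, #{b ∈ T | Q (a, b)} := by
  simp only [card_filter, sum_product]

lemma card_filter_product_eq_sum_right {α β : Type*} (Q : α × β → Prop) [DecidablePred Q]
    (S : Finset α) (T : Finset β) : #{p ∈ S ×ˢ T | Q p} = ∑ b ∈ T, #{a ∈ S | Q (a, b)} := by
  simp only [card_filter, sum_product_right]

section ProductCount

variable {α : Type*} [Fintype α] [DecidableEq α] (P : α × α → Prop) [DecidablePred P]

lemma card_filter_univ_product (S T : Finset α) :
    #{p ∈ univ ×ˢ T | P p} = #{p ∈ S ×ˢ T | P p} + #{p ∈ Sᶜ ×ˢ T | P p} := by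
  rw [← card_union_of_disjoint
      (disjoint_filter_filter (disjoint_product.2 (Or.inl disjoint_compl_right))),
    ← filter_union, ← union_product, union_compl]

lemma card_filter_product_univ (S T : Finset α) :
    #{p ∈ S ×ˢ univ | P p} = #{p ∈ S ×ˢ T | P p} + #{p ∈ S ×ˢ Tᶜ | P p} := by
  rw [← card_union_of_disjoint
      (disjoint_filter_filter (disjoint_product.2 (Or.inr disjoint_compl_right))),
    ← filter_union, ← product_union, union_compl]

theorem card_filter_product_self_eq_compl_iff (S : Finset α) :
    #{p ∈ S ×ˢ S | P p} = #{p ∈ Sᶜ ×ˢ Sᶜ | P p} ↔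
      #{p ∈ univ ×ˢ S | P p} + #{p ∈ S ×ˢ univ | P p}
        = #{p ∈ univ ×ˢ Sᶜ | P p} + #{p ∈ Sᶜ ×ˢ univ | P p} := by
  rw [card_filter_univ_product P S S, card_filter_univ_product P S Sᶜ,
    card_filter_product_univ P S S, card_filter_product_univ P Sᶜ S]
  omega

end ProductCount

namespace ZMod

variable {m : ℕ}

lemma card_filter_intCast_mul_eq_zero [NeZero m] (k : ℤ) :
    #{y : ZMod m | (k : ZMod m) * y = 0} = Int.gcd k m := by
  have hker : ∀ y : ZMod m,
      (k : ZMod m) * y = 0 ↔ y ∈ (nsmulAddMonoidHom k.natAbs : ZMod m →+ ZMod m).ker := by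
    intro y
    rw [AddMonoidHom.mem_ker, nsmulAddMonoidHom_apply, nsmul_eq_mul]
    rcases Int.natAbs_eq k with h | h <;> rw [h] <;> simp
  rw [← Fintype.card_subtype, ← Nat.card_eq_fintype_card,
    Nat.card_congr (Equiv.subtypeEquivRight hker), IsAddCyclic.card_nsmulAddMonoidHom_ker,
    Nat.card_zmod, Nat.gcd_comm]
  rfl

lemma exists_intCast_mul_eq_intCast_iff (k z : ℤ) :
    (∃ y : ZMod m, (k : ZMod m) * y = z) ↔ (Int.gcd k m : ℤ) ∣ z := by
  constructor
  · rintro ⟨y, hy⟩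
    obtain ⟨x, rfl⟩ := ZMod.intCast_surjective y
    obtain ⟨t, ht⟩ := (ZMod.intCast_eq_intCast_iff_dvd_sub (k * x) z m).1 (by push_cast; exact hy)
    rw [show z = k * x + m * t by linarith]
    exact dvd_add ((Int.gcd_dvd_left ..).mul_right _) ((Int.gcd_dvd_right ..).mul_right _)
  · rintro ⟨t, rfl⟩
    refine ⟨(Int.gcdA k m * t : ℤ), ?_⟩
    rw [Int.gcd_eq_gcd_ab]
    push_cast [ZMod.natCast_self]
    ring

lemma card_filter_intCast_mul_eq_intCast [NeZero m] (k z : ℤ) :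
    #{y : ZMod m | (k : ZMod m) * y = z} = if (Int.gcd k m : ℤ) ∣ z then Int.gcd k m else 0 := by
  split_ifs with h
  · rw [← card_filter_intCast_mul_eq_zero k]
    exact AddMonoidHom.card_fiber_eq_of_mem_range (AddMonoidHom.mulLeft (k : ZMod m))
      ((exists_intCast_mul_eq_intCast_iff k z).2 h) ⟨0, mul_zero _⟩
  · rw [card_eq_zero, filter_eq_empty_iff]
    exact fun y _ hy => h ((exists_intCast_mul_eq_intCast_iff k z).1 ⟨y, hy⟩)

lemma card_filter_intCast_mul_add_eq [NeZero m] (k j : ℤ) (n : ZMod m) :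
    #{y : ZMod m | (k : ZMod m) * y + j = n}
      = if (Int.gcd k m : ℤ) ∣ j - n.val then Int.gcd k m else 0 := by
  have hfiber : ∀ y : ZMod m, (k : ZMod m) * y + j = n ↔ (k : ZMod m) * y = (n.val - j : ℤ) := by
    intro y
    rw [Int.cast_sub, Int.cast_natCast, ZMod.natCast_zmod_val, eq_sub_iff_add_eq]
  rw [filter_congr fun y _ => hfiber y, card_filter_intCast_mul_eq_intCast]
  exact if_congr dvd_sub_comm rfl rfl

variable [NeZero m] (k₁ k₂ : ℤ) (n : ZMod m) (S : Finset (ZMod m))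

lemma card_filter_product_univ_mul_add_mul_eq :
    #{p ∈ S ×ˢ univ | (k₁ : ZMod m) * p.1 + k₂ * p.2 = n}
      = Int.gcd k₂ m * #{a ∈ S | (Int.gcd k₂ m : ℤ) ∣ k₁ * a.val - n.val} := by
  have hrow : ∀ a : ZMod m, #{y | (k₁ : ZMod m) * a + k₂ * y = n}
      = if (Int.gcd k₂ m : ℤ) ∣ k₁ * a.val - n.val then Int.gcd k₂ m else 0 := by
    intro a
    rw [← card_filter_intCast_mul_add_eq]
    simp only [add_comm, Int.cast_mul, Int.cast_natCast, ZMod.natCast_zmod_val]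
  rw [card_filter_product_eq_sum, sum_congr rfl fun a _ => hrow a, ← sum_filter, sum_const,
    smul_eq_mul, mul_comm]

lemma card_filter_univ_product_mul_add_mul_eq :
    #{p ∈ univ ×ˢ S | (k₁ : ZMod m) * p.1 + k₂ * p.2 = n}
      = Int.gcd k₁ m * #{b ∈ S | (Int.gcd k₁ m : ℤ) ∣ k₂ * b.val - n.val} := by
  have hcol : ∀ b : ZMod m, #{x | (k₁ : ZMod m) * x + k₂ * b = n}
      = if (Int.gcd k₁ m : ℤ) ∣ k₂ * b.val - n.val then Int.gcd k₁ m else 0 := by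
    intro b
    rw [← card_filter_intCast_mul_add_eq]
    simp only [Int.cast_mul, Int.cast_natCast, ZMod.natCast_zmod_val]
  rw [card_filter_product_eq_sum_right, sum_congr rfl fun b _ => hcol b, ← sum_filter, sum_const,
    smul_eq_mul, mul_comm]

end ZMod

theorem stmt6_general (m : ℕ) [NeZero m] (k1 k2 : ℤ)
    (d1 d2 : ℕ) (hd1 : d1 = Int.gcd k1 m) (hd2 : d2 = Int.gcd k2 m)
    (A : Finset (ZMod m)) (n : ZMod m) :
    rhat m k1 k2 A n = rhat m k1 k2 Aᶜ n ↔
      d1 * (A.filter (fun a => (d1 : ℤ) ∣ k2 * (a.val : ℤ) - (n.val : ℤ))).card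
        + d2 * (A.filter (fun a => (d2 : ℤ) ∣ k1 * (a.val : ℤ) - (n.val : ℤ))).card
      = d1 * (Aᶜ.filter (fun b => (d1 : ℤ) ∣ k2 * (b.val : ℤ) - (n.val : ℤ))).card
        + d2 * (Aᶜ.filter (fun b => (d2 : ℤ) ∣ k1 * (b.val : ℤ) - (n.val : ℤ))).card := by
  subst hd1 hd2
  rw [rhat, rhat, card_filter_product_self_eq_compl_iff,
    ZMod.card_filter_univ_product_mul_add_mul_eq, ZMod.card_filter_univ_product_mul_add_mul_eq,
    ZMod.card_filter_product_univ_mul_add_mul_eq, ZMod.card_filter_product_univ_mul_add_mul_eq]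

theorem stmt6 (m : ℕ) [NeZero m] (hm : 2 ≤ m) (hme : Even m) (k1 k2 : ℤ)
    (d1 d2 d3 : ℕ) (hd1 : d1 = Int.gcd k1 m) (hd2 : d2 = Int.gcd k2 m) (hd3 : d3 = Nat.gcd d1 d2)
    (A : Finset (ZMod m)) (hA : 2 * A.card = m) (n : ZMod m) :
    rhat m k1 k2 A n = rhat m k1 k2 Aᶜ n ↔
      d1 * (A.filter (fun a => (d1 : ℤ) ∣ k2 * (a.val : ℤ) - (n.val : ℤ))).card
        + d2 * (A.filter (fun a => (d2 : ℤ) ∣ k1 * (a.val : ℤ) - (n.val : ℤ))).card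
      = d1 * (Aᶜ.filter (fun b => (d1 : ℤ) ∣ k2 * (b.val : ℤ) - (n.val : ℤ))).card
        + d2 * (Aᶜ.filter (fun b => (d2 : ℤ) ∣ k1 * (b.val : ℤ) - (n.val : ℤ))).card :=
  stmt6_general m k1 k2 d1 d2 hd1 hd2 A n
end

section
/- Let m be even and let k₁, k₂ be integers with gcd(k₁,m) = d₁, gcd(k₂,m) = d₂, gcd(d₁,d₂) = d₃. If k₁ and k₂ are both odd, then 2d₁d₂/d₃² divides m. -/
/-! `d₁d₂/d₃²` divides `lcm(d₁, d₂) = d₁d₂/d₃`, which divides `m`; it is odd because `d₁ ∣ k₁` and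
`d₂ ∣ k₂` are odd, so it is coprime to `2 ∣ m`. -/

theorem Nat.mul_div_gcd_mul_gcd_dvd_lcm (a b : ℕ) :
    a * b / (Nat.gcd a b * Nat.gcd a b) ∣ Nat.lcm a b := by
  rw [← Nat.div_mul_div_comm (Nat.gcd_dvd_left a b) (Nat.gcd_dvd_right a b), Nat.lcm_eq_mul_div,
    Nat.mul_div_assoc a (Nat.gcd_dvd_right a b)]
  exact Nat.mul_dvd_mul_right (Nat.div_dvd_of_dvd (Nat.gcd_dvd_left a b)) _

theorem Int.odd_gcd_of_odd_left {k : ℤ} (hk : Odd k) (n : ℤ) : Odd (Int.gcd k n) :=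
  (Int.natAbs_odd.mpr hk).of_dvd_nat (Nat.gcd_dvd_left _ _)

theorem Nat.two_mul_dvd_of_odd_of_dvd {n m : ℕ} (hn : Odd n) (hm : Even m) (hnm : n ∣ m) :
    2 * n ∣ m :=
  (Nat.coprime_two_left.mpr hn).mul_dvd_of_dvd_of_dvd hm.two_dvd hnm

theorem stmt11 (m : ℕ) (hm : Even m) (k1 k2 : ℤ) (hk1 : Odd k1) (hk2 : Odd k2)
    (d1 d2 d3 : ℕ) (hd1 : d1 = Int.gcd k1 m) (hd2 : d2 = Int.gcd k2 m) (hd3 : d3 = Nat.gcd d1 d2) :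
    2 * (d1 * d2 / (d3 * d3)) ∣ m := by
  have hd1m : d1 ∣ m := hd1 ▸ Int.gcd_dvd_natAbs_right k1 m
  have hd2m : d2 ∣ m := hd2 ▸ Int.gcd_dvd_natAbs_right k2 m
  have hodd : Odd (d1 * d2) :=
    (hd1 ▸ Int.odd_gcd_of_odd_left hk1 m).mul (hd2 ▸ Int.odd_gcd_of_odd_left hk2 m)
  have hdvd_lcm : d1 * d2 / (d3 * d3) ∣ Nat.lcm d1 d2 :=
    hd3 ▸ Nat.mul_div_gcd_mul_gcd_dvd_lcm d1 d2
  refine Nat.two_mul_dvd_of_odd_of_dvd ?_ hm (hdvd_lcm.trans (Nat.lcm_dvd hd1m hd2m))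
  exact hodd.of_dvd_nat (hdvd_lcm.trans (Nat.lcm_dvd_mul d1 d2))
end

section
/- Let m ≥ 2 be even and k₁, k₂ integers, and suppose A ⊆ ℤ_m satisfies |A| = m/2 and A is uniformly distributed modulo d₁d₂/d₃², where d₁ = gcd(k₁,m), d₂ = gcd(k₂,m), d₃ = gcd(d₁,d₂). Then r̂_{k₁,k₂}(A,n) = r̂_{k₁,k₂}(ℤ_m \ A, n) for all n ∈ ℤ_m. -/
def unif (m d : ℕ) (A : Finset (ZMod m)) : Prop :=
  ∀ u : ℤ, (A.filter (fun a => (d : ℤ) ∣ (a.val : ℤ) - u)).card * d = A.card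

/-!
Write `r(S, T)` for the number of solutions of `k₁ a + k₂ b = n` with `(a, b) ∈ S × T`.
Splitting `S × T` along `A` and `Aᶜ` gives `r(A, A) - r(Aᶜ, Aᶜ) = r(A, ℤ_m) - r(ℤ_m, Aᶜ)`, so it
suffices that `r(A, ℤ_m) = r(Aᶜ, ℤ_m)` and `r(ℤ_m, A) = r(ℤ_m, Aᶜ)`. The number of `b` with
`k₁ a + k₂ b = n` depends only on `a` modulo `d₂ / d₃`, since `k₁ (d₂ / d₃)` is a multiple of `d₂`
and hence lies in `k₂ ℤ_m`. As `d₂ / d₃` divides `d₁ d₂ / d₃²`, both `A` and `Aᶜ` (which have the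
same size) are uniformly distributed modulo `d₂ / d₃`, and a double count over pairs in a common
residue class finishes the argument.
-/

open Finset

theorem Int.natCast_dvd_mul_natCast_div {c d : ℕ} {k : ℤ} (hk : (c : ℤ) ∣ k) (hd : c ∣ d) :
    (d : ℤ) ∣ k * (d / c : ℕ) := by
  obtain ⟨k, rfl⟩ := hk
  obtain ⟨d, rfl⟩ := hd
  rcases c.eq_zero_or_pos with rfl | hc
  · simp
  · rw [Nat.mul_div_cancel_left _ hc]
    exact ⟨k, by push_cast; ring⟩

theorem Nat.div_gcd_mul_div_gcd_dvd {a b m : ℕ} (ha : a ∣ m) (hb : b ∣ m) :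
    a / a.gcd b * (b / a.gcd b) ∣ m :=
  calc a / a.gcd b * (b / a.gcd b) ∣ a / a.gcd b * b :=
        Nat.mul_dvd_mul_left _ (Nat.div_dvd_of_dvd (Nat.gcd_dvd_right a b))
    _ = a.lcm b := Nat.div_mul_right_comm (Nat.gcd_dvd_left a b) b
    _ ∣ m := Nat.lcm_dvd ha hb

theorem card_filter_add_card_filter_compl {α : Type*} [Fintype α] [DecidableEq α]
    (S : Finset α) (p : α → Prop) [DecidablePred p] :
    #{x ∈ S | p x} + #{x ∈ Sᶜ | p x} = #{x | p x} := by
  rw [← card_union_of_disjoint (disjoint_filter_filter disjoint_compl_right), ← filter_union,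
    union_compl]

section Uniform

variable {m : ℕ}

theorem unif_univ_of_dvd [NeZero m] {e : ℕ} (he : e ∣ m) : unif m e univ := by
  intro u
  have : NeZero e := ⟨fun h => NeZero.ne m (Nat.eq_zero_of_zero_dvd (h ▸ he))⟩
  set φ := (ZMod.castHom he (ZMod e)).toAddMonoidHom
  have hsurj : Function.Surjective φ := ZMod.castHom_surjective he
  have hφ : ∀ x : ZMod m, (e : ℤ) ∣ (x.val : ℤ) - u ↔ φ x = u := by
    intro x
    change _ ↔ ZMod.cast x = (u : ZMod e)
    rw [ZMod.cast_eq_val, ← Int.cast_natCast (R := ZMod e) x.val,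
      ZMod.intCast_eq_intCast_iff_dvd_sub, dvd_sub_comm]
  calc #{x ∈ (univ : Finset (ZMod m)) | (e : ℤ) ∣ (x.val : ℤ) - u} * e
        = ∑ y : ZMod e, #{x | φ x = y} := by
        simp_rw [hφ]
        rw [sum_congr rfl fun y _ => AddMonoidHom.card_fiber_eq_of_mem_range φ (hsurj y) (hsurj u),
          sum_const, card_univ, ZMod.card, smul_eq_mul, mul_comm]
    _ = #(univ : Finset (ZMod m)) := (card_eq_sum_card_fiberwise (by simp)).symm

theorem card_mul_sum_eq_of_unif {e : ℕ} {A B : Finset (ZMod m)} (hA : unif m e A)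
    (hB : unif m e B) (g : ZMod m → ℕ)
    (hg : ∀ a b : ZMod m, (e : ℤ) ∣ (a.val : ℤ) - b.val → g a = g b) :
    #B * ∑ a ∈ A, g a = #A * ∑ b ∈ B, g b :=
  calc #B * ∑ a ∈ A, g a = e * ∑ a ∈ A, ∑ b ∈ B with (e : ℤ) ∣ (b.val : ℤ) - a.val, g a := by
        rw [mul_sum, mul_sum]
        refine sum_congr rfl fun a _ => ?_
        rw [sum_const, smul_eq_mul, ← hB a.val]
        ring
    _ = e * ∑ b ∈ B, ∑ a ∈ A with (e : ℤ) ∣ (a.val : ℤ) - b.val, g b := by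
        simp_rw [sum_filter]
        rw [sum_comm]
        refine congrArg _ (sum_congr rfl fun b _ => sum_congr rfl fun a _ => ?_)
        by_cases h : (e : ℤ) ∣ (a.val : ℤ) - b.val
        · simp [h, dvd_sub_comm.mp h, hg a b h]
        · simp [h, mt dvd_sub_comm.mp h]
    _ = #A * ∑ b ∈ B, g b := by
        rw [mul_sum, mul_sum]
        refine sum_congr rfl fun b _ => ?_
        rw [sum_const, smul_eq_mul, ← hA b.val]
        ring

theorem unif_of_dvd [NeZero m] {D e : ℕ} {A : Finset (ZMod m)} (hDm : D ∣ m) (hA : unif m D A)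
    (he : e ∣ D) : unif m e A := by
  intro u
  have hbal := card_mul_sum_eq_of_unif hA (unif_univ_of_dvd hDm)
    (fun x => if (e : ℤ) ∣ (x.val : ℤ) - u then 1 else 0) fun a b hab => by
      have hab' : (e : ℤ) ∣ (a.val : ℤ) - b.val := (Int.natCast_dvd_natCast.mpr he).trans hab
      simp only [show (a.val : ℤ) - u = (a.val - b.val) + (b.val - u) by ring,
        dvd_add_right hab']
  rw [← card_filter, ← card_filter, card_univ, ZMod.card] at hbal
  have huniv := unif_univ_of_dvd (he.trans hDm) u
  rw [card_univ, ZMod.card] at huniv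
  refine Nat.eq_of_mul_eq_mul_left (NeZero.pos m) ?_
  rw [← mul_assoc, hbal, mul_assoc, huniv, mul_comm]

theorem unif_compl [NeZero m] {e : ℕ} {A : Finset (ZMod m)} (he : e ∣ m) (hA : unif m e A) :
    unif m e Aᶜ := by
  intro u
  have hsplit := congrArg (· * e) (card_filter_add_card_filter_compl A
    fun x => (e : ℤ) ∣ (x.val : ℤ) - u)
  have huniv := unif_univ_of_dvd he u
  simp only [add_mul, hA u, huniv, card_univ, ZMod.card] at hsplit
  rw [card_compl, ZMod.card]
  omega

end Uniform

theorem card_filter_mul_add_eq_of_mul_eq {R : Type*} [CommRing R] [Fintype R] [DecidableEq R]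
    {c₁ c₂ s t : R} (h : c₂ * s = c₁ * t) (a n : R) :
    #{b | c₁ * (a + t) + c₂ * b = n} = #{b | c₁ * a + c₂ * b = n} := by
  refine card_nbij' (· + s) (· - s) ?_ ?_ ?_ ?_ <;> intro b hb <;>
    simp only [coe_filter, mem_univ, true_and, Set.mem_ofPred_eq] at hb ⊢
  · linear_combination hb + h
  · linear_combination hb - h
  · ring
  · ring

theorem ZMod.exists_intCast_mul_eq {m : ℕ} (k c : ℤ) (h : (Int.gcd k m : ℤ) ∣ c) :
    ∃ s : ZMod m, (k : ZMod m) * s = c := by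
  obtain ⟨q, rfl⟩ := h
  refine ⟨(k.gcdA m * q : ℤ), ?_⟩
  rw [Int.gcd_eq_gcd_ab]
  push_cast
  rw [ZMod.natCast_self]
  ring

theorem card_solutions_eq_of_dvd_sub {m : ℕ} [NeZero m] {k₁ k₂ : ℤ} {e : ℕ}
    (hk : (Int.gcd k₂ m : ℤ) ∣ k₁ * e) (n : ZMod m) {a a' : ZMod m}
    (h : (e : ℤ) ∣ (a.val : ℤ) - a'.val) :
    #{b | (k₁ : ZMod m) * a + k₂ * b = n} = #{b | (k₁ : ZMod m) * a' + k₂ * b = n} := by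
  obtain ⟨j, hj⟩ := h
  obtain ⟨s, hs⟩ := ZMod.exists_intCast_mul_eq k₂ (k₁ * e * j) (dvd_mul_of_dvd_left hk j)
  have ha : a = a' + ((e * j : ℤ) : ZMod m) := by
    rw [← hj]
    push_cast
    simp only [ZMod.natCast_zmod_val, add_sub_cancel]
  rw [ha]
  exact card_filter_mul_add_eq_of_mul_eq (by rw [hs]; push_cast; ring) a' n

section PairCount

variable {m : ℕ}

def pairCount (m : ℕ) (k₁ k₂ : ℤ) (S T : Finset (ZMod m)) (n : ZMod m) : ℕ :=
  #{p ∈ S ×ˢ T | (k₁ : ZMod m) * p.1 + (k₂ : ZMod m) * p.2 = n}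

variable (k₁ k₂ : ℤ) (n : ZMod m)

theorem pairCount_eq_sum (S T : Finset (ZMod m)) :
    pairCount m k₁ k₂ S T n = ∑ a ∈ S, #{b ∈ T | (k₁ : ZMod m) * a + k₂ * b = n} := by
  rw [pairCount, card_filter, sum_product]
  simp_rw [card_filter]

theorem pairCount_comm (S T : Finset (ZMod m)) :
    pairCount m k₁ k₂ S T n = pairCount m k₂ k₁ T S n := by
  refine card_nbij' Prod.swap Prod.swap ?_ ?_ (fun _ _ => rfl) (fun _ _ => rfl) <;>
    rintro ⟨a, b⟩ hab <;>
    simp only [coe_filter, mem_product, Set.mem_ofPred_eq, Prod.swap_prod_mk] at hab ⊢ <;>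
    exact ⟨hab.1.symm, by rw [← hab.2, add_comm]⟩

variable [NeZero m]

theorem pairCount_add_pairCount_compl_right (S T : Finset (ZMod m)) :
    pairCount m k₁ k₂ S T n + pairCount m k₁ k₂ S Tᶜ n = pairCount m k₁ k₂ S univ n := by
  simp only [pairCount_eq_sum, ← sum_add_distrib, card_filter_add_card_filter_compl]

theorem pairCount_add_pairCount_compl_left (S T : Finset (ZMod m)) :
    pairCount m k₁ k₂ S T n + pairCount m k₁ k₂ Sᶜ T n = pairCount m k₁ k₂ univ T n := by
  simp only [pairCount_comm k₁ k₂ _ _ T, pairCount_add_pairCount_compl_right]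

theorem pairCount_self_eq_compl_of_balanced {S : Finset (ZMod m)}
    (hrow : pairCount m k₁ k₂ S univ n = pairCount m k₁ k₂ Sᶜ univ n)
    (hcol : pairCount m k₁ k₂ univ S n = pairCount m k₁ k₂ univ Sᶜ n) :
    pairCount m k₁ k₂ S S n = pairCount m k₁ k₂ Sᶜ Sᶜ n := by
  have h₁ := pairCount_add_pairCount_compl_right k₁ k₂ n S S
  have h₂ := pairCount_add_pairCount_compl_left k₁ k₂ n S Sᶜ
  have h₃ := pairCount_add_pairCount_compl_left k₁ k₂ n S univ
  have h₄ := pairCount_add_pairCount_compl_right k₁ k₂ n univ S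
  omega

theorem pairCount_univ_right_eq_compl {e : ℕ} {S : Finset (ZMod m)} (he : e ∣ m)
    (hk : (Int.gcd k₂ m : ℤ) ∣ k₁ * e) (hS : unif m e S) (hcard : 2 * #S = m) :
    pairCount m k₁ k₂ S univ n = pairCount m k₁ k₂ Sᶜ univ n := by
  have hbal := card_mul_sum_eq_of_unif hS (unif_compl he hS) _
    fun a b hab => card_solutions_eq_of_dvd_sub hk n hab
  have hcompl : #Sᶜ = #S := by rw [card_compl, ZMod.card]; omega
  rw [hcompl] at hbal
  simp only [pairCount_eq_sum]
  exact Nat.eq_of_mul_eq_mul_left (by have := NeZero.pos m; omega) hbal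

end PairCount

theorem stmt19_general (m : ℕ) [NeZero m] (k1 k2 : ℤ)
    (d1 d2 d3 : ℕ) (hd1 : d1 = Int.gcd k1 m) (hd2 : d2 = Int.gcd k2 m) (hd3 : d3 = Nat.gcd d1 d2)
    (A : Finset (ZMod m)) (hA : 2 * A.card = m) (hu : unif m (d1 * d2 / (d3 * d3)) A) :
    ∀ n : ZMod m, rhat m k1 k2 A n = rhat m k1 k2 Aᶜ n := by
  intro n
  have hd1m : d1 ∣ m := hd1 ▸ Nat.gcd_dvd_right _ _
  have hd2m : d2 ∣ m := hd2 ▸ Nat.gcd_dvd_right _ _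
  have hd31 : d3 ∣ d1 := hd3 ▸ Nat.gcd_dvd_left d1 d2
  have hd32 : d3 ∣ d2 := hd3 ▸ Nat.gcd_dvd_right d1 d2
  have hd3k1 : (d3 : ℤ) ∣ k1 :=
    (Int.natCast_dvd_natCast.mpr hd31).trans (hd1 ▸ Int.gcd_dvd_left _ _)
  have hd3k2 : (d3 : ℤ) ∣ k2 :=
    (Int.natCast_dvd_natCast.mpr hd32).trans (hd2 ▸ Int.gcd_dvd_left _ _)
  rw [← Nat.div_mul_div_comm hd31 hd32] at hu
  have hDm : d1 / d3 * (d2 / d3) ∣ m := hd3 ▸ Nat.div_gcd_mul_div_gcd_dvd hd1m hd2m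
  have hrow := pairCount_univ_right_eq_compl k1 k2 n ((Nat.div_dvd_of_dvd hd32).trans hd2m)
    (hd2 ▸ Int.natCast_dvd_mul_natCast_div hd3k1 hd32) (unif_of_dvd hDm hu (dvd_mul_left _ _)) hA
  have hcol := pairCount_univ_right_eq_compl k2 k1 n ((Nat.div_dvd_of_dvd hd31).trans hd1m)
    (hd1 ▸ Int.natCast_dvd_mul_natCast_div hd3k2 hd31) (unif_of_dvd hDm hu (dvd_mul_right _ _)) hA
  rw [pairCount_comm, pairCount_comm k2] at hcol
  exact pairCount_self_eq_compl_of_balanced k1 k2 n hrow hcol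

theorem stmt19 (m : ℕ) [NeZero m] (hm : 2 ≤ m) (hme : Even m) (k1 k2 : ℤ)
    (d1 d2 d3 : ℕ) (hd1 : d1 = Int.gcd k1 m) (hd2 : d2 = Int.gcd k2 m) (hd3 : d3 = Nat.gcd d1 d2)
    (A : Finset (ZMod m)) (hA : 2 * A.card = m) (hu : unif m (d1 * d2 / (d3 * d3)) A) :
    ∀ n : ZMod m, rhat m k1 k2 A n = rhat m k1 k2 Aᶜ n :=
  stmt19_general m k1 k2 d1 d2 d3 hd1 hd2 hd3 A hA hu
end
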